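/- Let s : ℕ → ℕ be any sequence (to be thought of as the number of S-structures on an m-element set, for a species S). For each n ≥ 0 define a(n) = s(0) · Σ_{f parking function on [n]} ∏_{i=1}^{n} s(m_i), where m_i = #f^{-1}(i) (so a(0) = s(0)). Let A(t) = Σ_{n≥0} a(n)·t^n/n! and S(t) = Σ_{m≥0} s(m)·t^m/m! in ℚ[[t]]. Then A(t) = S(t·A(t)), i.e., A equals the substitution of the power series t·A(t) (which has zero constant term) into S. -/

import Mathlib

open PowerSeries

/-- A parking function on `[n] = {1, …, n}` (modeled by `Fin n`, with `i : Fin n`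
representing the value `i + 1`). -/
def IsParkingFunction (n : ℕ) (f : Fin n → Fin n) : Prop :=
  ∀ k ∈ Finset.Icc 1 n, k ≤ (Finset.univ.filter fun i => (f i : ℕ) + 1 ≤ k).card

instance (n : ℕ) : DecidablePred (IsParkingFunction n) := fun f => by
  unfold IsParkingFunction; infer_instance

/-- `m_i = #f⁻¹(i)`, the size of the fiber of `f` over `i`. -/
def fiberCard (n : ℕ) (f : Fin n → Fin n) (i : Fin n) : ℕ :=
  (Finset.univ.filter fun j => f j = i).card

/-- `a(n) = s(0) · Σ_{f parking function on [n]} Π_i s(m_i)`, the number of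
parking-like structures over a species with `s m` structures on an `m`-set. -/
def aCount (s : ℕ → ℕ) (n : ℕ) : ℕ :=
  s 0 * ∑ f : {f : Fin n → Fin n // IsParkingFunction n f},
    ∏ i : Fin n, s (fiberCard n f.1 i)

/-- Composition `F(g)` of formal power series, valid (i.e., agreeing with the usual
substitution) whenever the constant term of `g` is zero. -/
noncomputable def seriesComp (F g : PowerSeries ℚ) : PowerSeries ℚ :=
  PowerSeries.mk fun n =>
    PowerSeries.coeff (R := ℚ) n (∑ k ∈ Finset.range (n + 1), PowerSeries.coeff (R := ℚ) k F • g ^ k)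


/-!
Let `T` be the solution of `T = S(t T)`. Lagrange inversion gives
`(n + 1) [tⁿ] T = [tⁿ] Sⁿ⁺¹`, and by the exponential formula `n! [tⁿ] Sⁿ⁺¹` is the total weight
`∑ ∏ᵢ s(#f⁻¹ i)` of all maps `f : [n] → ℤ/(n+1)`. The cycle lemma says that exactly one of the
`n + 1` rotations `f - c` is a parking function with values in `[n] ⊂ ℤ/(n+1)`; rotating preserves
the weight, and the empty fiber over the remaining point contributes `s(0)`. So the total weight is
`(n + 1) a(n)`, i.e. `a(n) / n! = [tⁿ] T`.
-/

open Finset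

namespace PowerSeries

section Substitution

variable {R : Type*} [CommRing R]

theorem coeff_pow_eq_zero_of_lt {g : R⟦X⟧} (hg : constantCoeff g = 0) {n k : ℕ} (h : n < k) :
    coeff n (g ^ k) = 0 :=
  X_pow_dvd_iff.mp (pow_dvd_pow_of_dvd (X_dvd_iff.mpr hg) k) n h

theorem coeff_subst_eq_sum_range (F : R⟦X⟧) {g : R⟦X⟧} (hg : constantCoeff g = 0) (n : ℕ) :
    coeff n (F.subst g) = ∑ k ∈ range (n + 1), coeff k F * coeff n (g ^ k) := by
  rw [coeff_subst' (HasSubst.of_constantCoeff_zero' hg)]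
  refine finsum_eq_sum_of_support_subset _ fun k hk => ?_
  rw [Function.mem_support] at hk
  rw [coe_range, Set.mem_Iio, Nat.lt_succ_iff]
  by_contra! hnk
  exact hk (by rw [coeff_pow_eq_zero_of_lt hg hnk, smul_zero])

theorem coeff_subst_X_mul_congr (F : R⟦X⟧) {U V : R⟦X⟧} {n : ℕ}
    (h : ∀ j < n, coeff j U = coeff j V) :
    coeff n (F.subst (X * U)) = coeff n (F.subst (X * V)) := by
  have htrunc : trunc (n + 1) (X * U) = trunc (n + 1) (X * V) := by
    ext (_ | j) <;> simp only [coeff_trunc, coeff_zero_X_mul, coeff_succ_X_mul]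
    split_ifs with hj
    exacts [h j (by omega), rfl]
  have hpow (k : ℕ) : coeff n ((X * U) ^ k) = coeff n ((X * V) ^ k) := by
    rw [← coeff_coe_trunc_of_lt (Nat.lt_succ_self n), ← trunc_trunc_pow, htrunc,
      trunc_trunc_pow, coeff_coe_trunc_of_lt (Nat.lt_succ_self n)]
  simp only [coeff_subst_eq_sum_range F (g := X * _) (by simp), hpow]

noncomputable def substFixedPointCoeff (F : R⟦X⟧) (n : ℕ) : R :=
  coeff n (F.subst (X * mk fun j => if j < n then substFixedPointCoeff F j else 0))

theorem exists_eq_subst_X_mul (F : R⟦X⟧) : ∃ T : R⟦X⟧, T = F.subst (X * T) := by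
  refine ⟨mk (substFixedPointCoeff F), ext fun n => ?_⟩
  rw [coeff_mk, substFixedPointCoeff]
  exact coeff_subst_X_mul_congr F fun j hj => by simp [hj]

end Substitution

section Derivative

variable {R : Type*} [CommRing R]

theorem coeff_X_mul_derivative (f : R⟦X⟧) (n : ℕ) : coeff n (X * d⁄dX R f) = n * coeff n f := by
  cases n with
  | zero => simp
  | succ n => rw [coeff_succ_X_mul, coeff_derivative, mul_comm]; push_cast; ring

theorem sum_range_natCast_mul_coeff_mul_coeff (F G : R⟦X⟧) (N : ℕ) :
    ∑ m ∈ range (N + 1), (m : R) * coeff m F * coeff (N - m) G = coeff N (X * d⁄dX R F * G) := by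
  rw [coeff_mul, Finset.Nat.sum_antidiagonal_eq_sum_range_succ_mk]
  exact sum_congr rfl fun m _ => by rw [coeff_X_mul_derivative]

theorem X_mul_derivative_pow_mul_pow (S : R⟦X⟧) (k N : ℕ) :
    (N + k) • (X * d⁄dX R (S ^ k) * S ^ N) = k • (X * d⁄dX R (S ^ (N + k))) := by
  rcases Nat.eq_zero_or_pos k with rfl | hk
  · simp
  simp only [Derivation.leibniz_pow, nsmul_eq_mul, smul_eq_mul]
  have hpow : S ^ (k - 1) * S ^ N = S ^ (N + k - 1) := by rw [← pow_add]; congr 1; omega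
  linear_combination (↑(N + k) * ↑k * X * d⁄dX R S) * hpow

end Derivative

section Lagrange

variable {K : Type*} [Field K] [CharZero K]

/-- Lagrange inversion. -/
theorem natCast_mul_coeff_X_mul_pow {S T : K⟦X⟧} (hT : T = S.subst (X * T)) :
    ∀ n k : ℕ, k ≤ n → (n : K) * coeff n ((X * T) ^ k) = k * coeff (n - k) (S ^ n) := by
  have hXT : constantCoeff (X * T) = 0 := by simp
  intro n
  induction n using Nat.strong_induction_on with
  | _ n ih =>
  intro k hkn
  rcases Nat.eq_zero_or_pos k with rfl | hk
  · simp [coeff_one]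
  obtain ⟨N, rfl⟩ : ∃ N, n = N + k := ⟨n - k, by omega⟩
  have hpow : (X * T) ^ k = X ^ k * (S ^ k).subst (X * T) := by
    conv_lhs => rw [hT]
    rw [mul_pow, subst_pow (HasSubst.of_constantCoeff_zero' hXT)]
  have hcoeff : coeff (N + k) ((X * T) ^ k) =
      ∑ m ∈ range (N + 1), coeff m (S ^ k) * coeff N ((X * T) ^ m) := by
    rw [hpow, coeff_X_pow_mul', if_pos (by omega), Nat.add_sub_cancel,
      coeff_subst_eq_sum_range _ hXT]
  rcases Nat.eq_zero_or_pos N with rfl | hN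
  · rw [zero_add] at hcoeff
    simp [hcoeff]
  have hsum : (N : K) * coeff (N + k) ((X * T) ^ k) = coeff N (X * d⁄dX K (S ^ k) * S ^ N) := by
    rw [hcoeff, mul_sum, ← sum_range_natCast_mul_coeff_mul_coeff]
    refine sum_congr rfl fun m hm => ?_
    rw [mul_left_comm, ih N (by omega) m (by simpa [Nat.lt_succ_iff] using hm)]
    ring
  have hderiv := congrArg (coeff N) (X_mul_derivative_pow_mul_pow S k N)
  rw [map_nsmul, map_nsmul, coeff_X_mul_derivative, nsmul_eq_mul, nsmul_eq_mul] at hderiv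
  have hN' : (N : K) ≠ 0 := by exact_mod_cast hN.ne'
  apply mul_left_cancel₀ hN'
  rw [Nat.add_sub_cancel]
  linear_combination (↑(N + k) : K) * hsum + hderiv

theorem coeff_eq_of_eq_subst_X_mul {S T : K⟦X⟧} (hT : T = S.subst (X * T)) (n : ℕ) :
    coeff n T = coeff n (S ^ (n + 1)) / (n + 1) := by
  have h := natCast_mul_coeff_X_mul_pow hT (n + 1) 1 (by omega)
  rw [pow_one, coeff_succ_X_mul, Nat.add_sub_cancel, Nat.cast_one, one_mul] at h
  rw [← h]
  field_simp
  push_cast; ring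

end Lagrange

end PowerSeries

theorem seriesComp_eq_subst (F : ℚ⟦X⟧) {g : ℚ⟦X⟧} (hg : constantCoeff g = 0) :
    seriesComp F g = F.subst g := by
  ext n
  simp [seriesComp, coeff_subst_eq_sum_range F hg, smul_eq_mul]

section Fibers

variable {α β : Type*} [Fintype α] [DecidableEq β]

def fiberSize (f : α → β) (b : β) : ℕ := #{a | f a = b}

def fiberWeight [Fintype β] {M : Type*} [CommMonoid M] (w : ℕ → M) (f : α → β) : M :=
  ∏ b, w (fiberSize f b)

theorem fiberSize_comp_of_injective {γ : Type*} [DecidableEq γ] {e : β → γ}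
    (he : Function.Injective e) (f : α → β) (b : β) : fiberSize (e ∘ f) (e b) = fiberSize f b := by
  simp only [fiberSize, Function.comp_apply, he.eq_iff]

theorem fiberWeight_equiv_comp [Fintype β] {M : Type*} [CommMonoid M] (w : ℕ → M) (σ : β ≃ β)
    (f : α → β) : fiberWeight w (σ ∘ f) = fiberWeight w f := by
  rw [fiberWeight, ← Equiv.prod_comp σ]
  simp only [fiberSize_comp_of_injective σ.injective, fiberWeight]

theorem sum_fiberSize [Fintype β] (f : α → β) : ∑ b, fiberSize f b = Fintype.card α :=
  (card_eq_sum_card_fiberwise fun a _ => mem_univ (f a)).symm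

variable {M : Type*} [CommSemiring M] [DecidableEq α]

theorem fiberSize_castPred {q : ℕ} {T : Finset α} (f : α → Fin (q + 1))
    (hf : ({a | f a = Fin.last q} : Finset α) = T) (i : Fin q) :
    fiberSize (fun x : ↥Tᶜ => (f x).castPred fun h => by
      simpa [← hf, h] using x.2) i = fiberSize f i.castSucc := by
  refine card_bij (fun x _ => x.1) (fun x hx => ?_) (fun x _ y _ => Subtype.ext) fun a ha => ?_
  · simp only [mem_filter, mem_univ, true_and, Fin.castPred_eq_iff_eq_castSucc] at hx ⊢
    exact hx
  · simp only [mem_filter, mem_univ, true_and] at ha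
    have haT : a ∈ Tᶜ := by simp [← hf, ha, (Fin.castSucc_lt_last i).ne]
    exact ⟨⟨a, haT⟩, by simpa [Fin.castPred_eq_iff_eq_castSucc] using ha, rfl⟩

theorem sum_fiberWeight_fin_succ (w : ℕ → M) (q : ℕ) :
    ∑ f : α → Fin (q + 1), fiberWeight w f =
      ∑ T : Finset α, w #T * ∑ g : ↥Tᶜ → Fin q, fiberWeight w g := by
  rw [← sum_fiberwise_of_maps_to (t := univ)
    (g := fun f : α → Fin (q + 1) => ({a | f a = Fin.last q} : Finset α)) fun _ _ => mem_univ _]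
  refine sum_congr rfl fun T _ => ?_
  rw [mul_sum]
  refine sum_bij' (fun f hf x => (f x).castPred fun h => by
      simpa [← (mem_filter.mp hf).2, h] using x.2)
    (fun g _ a => if h : a ∈ T then Fin.last q else (g ⟨a, by simpa⟩).castSucc)
    (fun _ _ => mem_univ _) (fun g _ => ?_) (fun f hf => ?_) (fun g _ => ?_) (fun f hf => ?_)
  · simp only [mem_filter, mem_univ, true_and]
    ext a
    by_cases ha : a ∈ T <;> simp [ha, (Fin.castSucc_lt_last _).ne]
  · have hf' := (mem_filter.mp hf).2
    funext a
    by_cases ha : a ∈ T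
    · simpa [ha] using ((mem_filter.mp (hf'.symm ▸ ha : a ∈ _)).2).symm
    · simp [ha]
  · funext x
    simp [mem_compl.mp x.2]
  · rw [fiberWeight, Fin.prod_univ_castSucc, mul_comm, fiberWeight]
    simp only [fiberSize, (mem_filter.mp hf).2]
    congr 1
    exact prod_congr rfl fun i _ => congrArg w (fiberSize_castPred f (mem_filter.mp hf).2 i).symm

end Fibers

section ExponentialFormula

variable {K : Type*} [Field K] [CharZero K]

noncomputable def egf (w : ℕ → K) : K⟦X⟧ := PowerSeries.mk fun m => w m / m.factorial

theorem sum_fiberWeight_eq_factorial_mul_coeff_egf_pow (w : ℕ → K) (q : ℕ) (α : Type*)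
    [Fintype α] [DecidableEq α] :
    ∑ f : α → Fin q, fiberWeight w f =
      (Fintype.card α).factorial * coeff (Fintype.card α) (egf w ^ q) := by
  induction q generalizing α with
  | zero =>
    cases isEmpty_or_nonempty α <;> simp [coeff_one, fiberWeight, *]
  | succ q ih =>
    have hcompl (T : Finset α) : Fintype.card ↥Tᶜ = Fintype.card α - #T := by
      rw [Fintype.card_coe, card_compl]
    simp only [sum_fiberWeight_fin_succ, ih, hcompl, ← powerset_univ]
    rw [sum_powerset_apply_card (f := fun j => w j * ((Fintype.card α - j).factorial *
      coeff (Fintype.card α - j) (egf w ^ q))), card_univ, pow_succ', coeff_mul,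
      Finset.Nat.sum_antidiagonal_eq_sum_range_succ_mk, mul_sum]
    refine sum_congr rfl fun j hj => ?_
    rw [nsmul_eq_mul, Nat.cast_choose K (Nat.lt_succ_iff.mp (mem_range.mp hj)), egf, coeff_mk]
    have := (Nat.factorial_pos j).ne'
    have := (Nat.factorial_pos (Fintype.card α - j)).ne'
    field_simp

end ExponentialFormula

section CycleLemma

variable {n : ℕ}
open Fin.NatCast

def IsParkingMap (g : Fin n → Fin (n + 1)) : Prop :=
  ∀ k ∈ Icc 1 n, k ≤ #{i | (g i : ℕ) + 1 ≤ k}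

instance : DecidablePred (IsParkingMap (n := n)) := fun g => by
  unfold IsParkingMap; infer_instance

def fiberPrefix (f : Fin n → Fin (n + 1)) (m : ℕ) : ℕ :=
  ∑ j ∈ range m, fiberSize f (j : Fin (n + 1))

def excess (f : Fin n → Fin (n + 1)) (m : ℕ) : ℤ := fiberPrefix f m - m

theorem card_filter_val_lt_eq_fiberPrefix (g : Fin n → Fin (n + 1)) {k : ℕ} (hk : k ≤ n + 1) :
    #{i | (g i : ℕ) < k} = fiberPrefix g k := by
  rw [card_eq_sum_card_fiberwise (f := fun i => (g i : ℕ)) (t := range k)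
    fun i hi => by simpa using hi]
  refine sum_congr rfl fun j hj => ?_
  have hjk : j < k := mem_range.mp hj
  simp only [fiberSize, filter_filter, Fin.ext_iff, Fin.val_natCast,
    Nat.mod_eq_of_lt (hjk.trans_le hk)]
  exact congrArg card (filter_congr fun i _ => ⟨fun h => h.2, fun h => ⟨h ▸ hjk, h⟩⟩)

theorem fiberPrefix_add (f : Fin n → Fin (n + 1)) (p k : ℕ) :
    fiberPrefix f (p + k) =
      fiberPrefix f p + ∑ j ∈ range k, fiberSize f ((p + j : ℕ) : Fin (n + 1)) :=
  sum_range_add _ _ _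

theorem fiberPrefix_add_period (f : Fin n → Fin (n + 1)) (m : ℕ) :
    fiberPrefix f (m + (n + 1)) = fiberPrefix f m + n := by
  rw [fiberPrefix_add,
    ← Fin.sum_univ_eq_sum_range (fun j => fiberSize f ((m + j : ℕ) : Fin (n + 1)))]
  simp only [Nat.cast_add, Fin.cast_val_eq_self]
  rw [Fintype.sum_equiv (Equiv.addLeft (m : Fin (n + 1))) (fun x => fiberSize f (m + x))
    (fiberSize f) fun _ => rfl, sum_fiberSize, Fintype.card_fin]

theorem excess_add_period (f : Fin n → Fin (n + 1)) (m : ℕ) :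
    excess f (m + (n + 1)) = excess f m - 1 := by
  simp only [excess, fiberPrefix_add_period]
  push_cast
  ring

theorem isParkingMap_sub_iff (f : Fin n → Fin (n + 1)) (c : Fin (n + 1)) :
    IsParkingMap (fun i => f i - c) ↔ ∀ k ∈ Icc 1 n, excess f c ≤ excess f (c + k) := by
  refine forall₂_congr fun k hk => ?_
  have hk := mem_Icc.mp hk
  have hcount : #{i | ((f i - c : Fin (n + 1)) : ℕ) + 1 ≤ k} =
      ∑ j ∈ range k, fiberSize f ((c + j : ℕ) : Fin (n + 1)) := by
    simp only [Nat.add_one_le_iff]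
    rw [card_filter_val_lt_eq_fiberPrefix (fun i => f i - c) (by omega), fiberPrefix]
    refine sum_congr rfl fun j _ => ?_
    rw [Nat.cast_add, Fin.cast_val_eq_self,
      ← fiberSize_comp_of_injective (Equiv.subRight c).injective f, Equiv.subRight_apply,
      add_sub_cancel_left]
    rfl
  rw [hcount, excess, excess, fiberPrefix_add, Nat.cast_add, Nat.cast_add]
  omega

theorem eq_of_isParkingMap_sub {f : Fin n → Fin (n + 1)} {c c' : Fin (n + 1)}
    (hc : IsParkingMap (fun i => f i - c)) (hc' : IsParkingMap (fun i => f i - c')) : c = c' := by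
  by_contra hne
  wlog hlt : c < c' generalizing c c'
  · exact this hc' hc (Ne.symm hne) (lt_of_le_of_ne (not_lt.mp hlt) (Ne.symm hne))
  rw [isParkingMap_sub_iff] at hc hc'
  rw [Fin.lt_def] at hlt
  have h₁ := hc (c' - c) (mem_Icc.mpr ⟨by omega, by omega⟩)
  have h₂ := hc' (c + (n + 1) - c') (mem_Icc.mpr ⟨by omega, by omega⟩)
  rw [Nat.add_sub_cancel' hlt.le] at h₁
  rw [Nat.add_sub_cancel' (by omega), excess_add_period] at h₂
  omega

/-- The cycle lemma. The path `excess f` drops by one per period, and the rotation starting it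
at its first minimum over a period is the parking one. -/
theorem existsUnique_isParkingMap_sub (f : Fin n → Fin (n + 1)) :
    ∃! c : Fin (n + 1), IsParkingMap (fun i => f i - c) := by
  obtain ⟨m₀, hm₀, hmin⟩ := exists_min_image (range (n + 1)) (excess f) nonempty_range_add_one
  have hmin' (m : ℕ) (hm : m ≤ n) : excess f m₀ ≤ excess f m :=
    hmin m (by simpa [Nat.lt_succ_iff])
  have hex : ∃ p, p ≤ n ∧ excess f m₀ = excess f p :=
    ⟨m₀, Nat.lt_succ_iff.mp (mem_range.mp hm₀), rfl⟩
  obtain ⟨hpn, hp⟩ := Nat.find_spec hex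
  set p := Nat.find hex
  have hpval : ((p : Fin (n + 1)) : ℕ) = p := Fin.val_cast_of_lt (by omega)
  have hpark : IsParkingMap (fun i => f i - p) := by
    refine (isParkingMap_sub_iff f p).mpr fun k hk => ?_
    rw [hpval, ← hp]
    have hk := mem_Icc.mp hk
    by_cases hpk : p + k ≤ n
    · exact hmin' _ hpk
    have hlt : p + k - (n + 1) < p := by omega
    have hnot := Nat.find_min hex hlt
    rw [show p + k = p + k - (n + 1) + (n + 1) by omega, excess_add_period]
    have := hmin' _ (by omega)
    grind
  exact ⟨p, hpark, fun c hc => eq_of_isParkingMap_sub hc hpark⟩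

variable {M : Type*} [CommSemiring M]

theorem sum_fiberWeight_eq_nsmul_sum_isParkingMap (w : ℕ → M) :
    ∑ f : Fin n → Fin (n + 1), fiberWeight w f =
      (n + 1) • ∑ g with IsParkingMap (n := n) g, fiberWeight w g := by
  have hsplit (f : Fin n → Fin (n + 1)) : fiberWeight w f = ∑ c,
      if IsParkingMap (fun i => f i - c) then fiberWeight w (fun i => f i - c) else 0 := by
    obtain ⟨c, hc, huniq⟩ := existsUnique_isParkingMap_sub f
    rw [sum_eq_single c (fun b _ hb => if_neg (mt (huniq b) hb)) (by simp), if_pos hc]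
    exact (fiberWeight_equiv_comp w (Equiv.subRight c) f).symm
  have hrotate (c : Fin (n + 1)) : ∑ f : Fin n → Fin (n + 1),
      (if IsParkingMap (fun i => f i - c) then fiberWeight w (fun i => f i - c) else 0) =
      ∑ g with IsParkingMap (n := n) g, fiberWeight w g := by
    rw [sum_filter]
    exact Fintype.sum_equiv (Equiv.subRight fun _ => c) _ _ fun _ => rfl
  rw [sum_congr rfl fun f _ => hsplit f, sum_comm, sum_congr rfl fun c _ => hrotate c, sum_const,
    card_univ, Fintype.card_fin]

theorem IsParkingMap.val_lt {g : Fin n → Fin (n + 1)} (hg : IsParkingMap g) (i : Fin n) :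
    (g i : ℕ) < n := by
  have hall := hg n (mem_Icc.mpr ⟨i.pos, le_rfl⟩)
  have hcard : #{j | (g j : ℕ) + 1 ≤ n} = Fintype.card (Fin n) :=
    le_antisymm (card_le_univ _) (by simpa using hall)
  have hi : i ∈ ({j | (g j : ℕ) + 1 ≤ n} : Finset (Fin n)) := by
    rw [eq_univ_of_card _ hcard]; exact mem_univ i
  simpa [Nat.add_one_le_iff] using hi

theorem isParkingMap_castSucc_comp_iff (f : Fin n → Fin n) :
    IsParkingMap (Fin.castSucc ∘ f) ↔ IsParkingFunction n f := Iff.rfl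

theorem sum_isParkingMap_fiberWeight (w : ℕ → M) :
    ∑ g with IsParkingMap (n := n) g, fiberWeight w g =
      w 0 * ∑ f : {f : Fin n → Fin n // IsParkingFunction n f}, ∏ i, w (fiberCard n f.1 i) := by
  rw [mul_sum]
  symm
  refine sum_bij (fun f _ => Fin.castSucc ∘ f.1)
    (fun f _ => mem_filter.mpr ⟨mem_univ _, (isParkingMap_castSucc_comp_iff f.1).mpr f.2⟩)
    (fun f _ f' _ h => Subtype.ext (funext fun i => Fin.castSucc_injective n (congrFun h i)))
    (fun g hg => ?_) (fun f _ => ?_)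
  · have hg := (mem_filter.mp hg).2
    exact ⟨⟨_, (isParkingMap_castSucc_comp_iff (fun i => ⟨g i, hg.val_lt i⟩)).mp hg⟩,
      mem_univ _, rfl⟩
  · have hlast : fiberSize (Fin.castSucc ∘ f.1) (Fin.last n) = 0 := by
      simp [fiberSize, Fin.castSucc_ne_last]
    rw [fiberWeight, Fin.prod_univ_castSucc, hlast, mul_comm]
    simp only [fiberSize_comp_of_injective (Fin.castSucc_injective n)]
    rfl

end CycleLemma

theorem natCast_succ_mul_aCount (s : ℕ → ℕ) (n : ℕ) :
    ((n + 1) * aCount s n : ℚ) = n.factorial * coeff n (egf (fun m => (s m : ℚ)) ^ (n + 1)) := by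
  have h := sum_fiberWeight_eq_factorial_mul_coeff_egf_pow (fun m => (s m : ℚ)) (n + 1) (Fin n)
  rw [Fintype.card_fin, sum_fiberWeight_eq_nsmul_sum_isParkingMap,
    sum_isParkingMap_fiberWeight, nsmul_eq_mul] at h
  rw [← h, aCount]
  push_cast
  rfl

/-- With `A(t) = Σ a(n) t^n/n!` and `S(t) = Σ s(m) t^m/m!`, we have
`A(t) = S(t · A(t))` in `ℚ⟦t⟧`. -/
theorem parkingLikeEGF_eq_comp (s : ℕ → ℕ) :
    (PowerSeries.mk fun n => (aCount s n : ℚ) / (n.factorial : ℚ)) =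
      seriesComp (PowerSeries.mk fun m => (s m : ℚ) / (m.factorial : ℚ))
        (PowerSeries.X *
          PowerSeries.mk fun n => (aCount s n : ℚ) / (n.factorial : ℚ)) := by
  obtain ⟨T, hT⟩ := exists_eq_subst_X_mul (egf fun m => (s m : ℚ))
  have hAT : (PowerSeries.mk fun n => (aCount s n : ℚ) / n.factorial) = T := by
    ext n
    have hfac : (n.factorial : ℚ) ≠ 0 := by positivity
    rw [coeff_mk, coeff_eq_of_eq_subst_X_mul hT, div_eq_div_iff hfac (by positivity)]
    linear_combination natCast_succ_mul_aCount s n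
  rw [seriesComp_eq_subst _ (by simp), hAT]
  exact hT
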